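/- For f locally absolutely continuous on (a,b) with α_{s_a}f ∈ L²((a,b);dx), s_a ≤ -1, one has the pointwise bound |f(x)/(x-a)^{1/2} - F·(x-a)^{s_a}| ≤ (-2 s_a)^{1/2} ‖α_{s_a}f‖_{L²((a,x))} for all x ∈ (a,b), where F = lim_{c→a⁺}(c-a)^{-s_a-1/2} f(c). -/

import Mathlib

/-! With `w(t) = (t-a)^{-s-1/2}` one has `(w f)' = w · α_s f`, so `w(x) f(x) - F` is the integral
of `w · α_s f` over `(a,x)`. Cauchy–Schwarz bounds it by `‖w‖_{L²(a,x)} ‖α_s f‖_{L²(a,x)}`, and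
`‖w‖_{L²(a,x)} = (x-a)^{-s} (-2s)^{-1/2}`. Dividing by `w(x)` gives the bound with the sharper
constant `(-2s)^{-1/2}`, which is at most `(-2s)^{1/2}` because `-2s ≥ 1`. -/

open MeasureTheory Set Filter Topology

theorem aestronglyMeasurable_restrict_of_hasDerivAt {E : Type*} [NormedAddCommGroup E]
    [NormedSpace ℝ E] [CompleteSpace E] {f f' : ℝ → E} {S : Set ℝ} (hS : MeasurableSet S)
    (h : ∀ x ∈ S, HasDerivAt f (f' x) x) : AEStronglyMeasurable f' (volume.restrict S) :=
  (aestronglyMeasurable_deriv f _).congr (ae_restrict_of_forall_mem hS fun x hx => (h x hx).deriv)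

theorem norm_integral_smul_le_of_memLp_two {X E : Type*} [MeasurableSpace X] {μ : Measure X}
    [NormedAddCommGroup E] [NormedSpace ℝ E] {w : X → ℝ} {g : X → E}
    (hw : MemLp w 2 μ) (hg : MemLp g 2 μ) :
    ‖∫ x, w x • g x ∂μ‖ ≤
      (∫ x, w x ^ 2 ∂μ) ^ ((1 : ℝ)/2) * (∫ x, ‖g x‖ ^ 2 ∂μ) ^ ((1 : ℝ)/2) := by
  have two : ENNReal.ofReal 2 = 2 := ENNReal.ofReal_ofNat 2
  have hCS := integral_mul_norm_le_Lp_mul_Lq (μ := μ) Real.HolderConjugate.two_two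
    (two ▸ hw) (two ▸ hg.norm)
  simp only [Real.rpow_two, Real.norm_eq_abs, sq_abs, abs_norm] at hCS
  calc ‖∫ x, w x • g x ∂μ‖ ≤ ∫ x, |w x| * ‖g x‖ ∂μ := by
        simpa only [norm_smul, Real.norm_eq_abs] using
          norm_integral_le_integral_norm (fun x => w x • g x)
    _ ≤ _ := hCS

section Weight

variable {a : ℝ}

theorem memLp_two_rpow_sub {x p : ℝ} (hp : -1/2 < p) :
    MemLp (fun t => (t - a) ^ p) 2 (volume.restrict (Ioo a x)) := by
  refine (memLp_two_iff_integrable_sq_norm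
    ((measurable_id.sub_const a).pow_const p).aestronglyMeasurable).2 ?_
  rcases le_or_gt x a with hx | hx
  · simp [Ioo_eq_empty (not_lt.2 hx)]
  have hint : IntervalIntegrable (fun t => (t - a) ^ (2 * p)) volume a x := by
    simpa using (intervalIntegral.intervalIntegrable_rpow' (r := 2 * p) (by linarith)
      (a := 0) (b := x - a)).comp_sub_right a
  refine ((intervalIntegrable_iff_integrableOn_Ioo_of_le hx.le).1 hint).congr_fun
    (fun t ht => ?_) measurableSet_Ioo
  simp only [id, Real.norm_of_nonneg (Real.rpow_nonneg (sub_pos.2 ht.1).le _)]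
  rw [← Real.rpow_natCast, ← Real.rpow_mul (sub_pos.2 ht.1).le, mul_comm]
  norm_num

theorem integral_Ioo_rpow_sub {x q : ℝ} (hax : a ≤ x) (hq : -1 < q) :
    ∫ t in Ioo a x, (t - a) ^ q = (x - a) ^ (q + 1) / (q + 1) := by
  rw [← integral_Ioc_eq_integral_Ioo, ← intervalIntegral.integral_of_le hax,
    intervalIntegral.integral_comp_sub_right (fun t => t ^ q), sub_self, integral_rpow (Or.inl hq),
    Real.zero_rpow (by linarith), sub_zero]

theorem hasDerivAt_ofReal_rpow_sub_mul {f : ℝ → ℂ} {f' : ℂ} {s t : ℝ} (ht : a < t)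
    (hf : HasDerivAt f f' t) :
    HasDerivAt (fun c => (((c - a) ^ (-s - 1/2 : ℝ) : ℝ) : ℂ) * f c)
      ((((t - a) ^ (-s - 1/2 : ℝ) : ℝ) : ℂ) * (f' - (((s + 1/2) / (t - a) : ℝ) : ℂ) * f t)) t := by
  have hta : t - a ≠ 0 := (sub_pos.2 ht).ne'
  have hw := ((hasDerivAt_id t).sub_const a).rpow_const (p := -s - 1/2) (Or.inl hta)
  refine (hw.ofReal_comp.mul hf).congr_deriv ?_
  simp only [id, one_mul, Real.rpow_sub_one hta]
  push_cast
  field_simp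
  ring

end Weight

section Estimate

variable {f f' : ℝ → ℂ} {F : ℂ} {a s x : ℝ}

theorem norm_rpow_sub_mul_sub_le (hs : s < 0) (hax : a < x)
    (hderiv : ∀ t ∈ Ioc a x, HasDerivAt f (f' t) t)
    (hα : IntegrableOn (fun t => ‖f' t - (((s + 1/2) / (t - a) : ℝ) : ℂ) * f t‖ ^ 2) (Ioo a x))
    (hF : Tendsto (fun c => (((c - a) ^ (-s - 1/2 : ℝ) : ℝ) : ℂ) * f c) (𝓝[>] a) (𝓝 F)) :
    ‖(((x - a) ^ (-s - 1/2 : ℝ) : ℝ) : ℂ) * f x - F‖ ≤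
      ((x - a) ^ (-2 * s) / (-2 * s)) ^ ((1 : ℝ)/2) *
        (∫ t in Ioo a x, ‖f' t - (((s + 1/2) / (t - a) : ℝ) : ℂ) * f t‖ ^ 2) ^ ((1 : ℝ)/2) := by
  set α : ℝ → ℂ := fun t => f' t - (((s + 1/2) / (t - a) : ℝ) : ℂ) * f t
  set w : ℝ → ℝ := fun t => (t - a) ^ (-s - 1/2 : ℝ)
  have hderiv' : ∀ t ∈ Ioo a x, HasDerivAt f (f' t) t :=
    fun t ht => hderiv t (Ioo_subset_Ioc_self ht)
  have hαm : MemLp α 2 (volume.restrict (Ioo a x)) := by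
    refine (memLp_two_iff_integrable_sq_norm ?_).2 hα
    refine (aestronglyMeasurable_restrict_of_hasDerivAt measurableSet_Ioo hderiv').sub
      (AEStronglyMeasurable.mul ?_ ((HasDerivAt.continuousOn hderiv').aestronglyMeasurable
        measurableSet_Ioo))
    exact (Complex.measurable_ofReal.comp
      (measurable_const.div (measurable_id.sub_const a))).aestronglyMeasurable
  have hwm : MemLp w 2 (volume.restrict (Ioo a x)) := memLp_two_rpow_sub (by linarith)
  have hFTC : ∫ t in Ioo a x, w t • α t = w x * f x - F := by
    have hint : IntervalIntegrable (fun t => (w t : ℂ) * α t) volume a x := by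
      refine (intervalIntegrable_iff_integrableOn_Ioo_of_le hax.le).2 ?_
      exact (memLp_one_iff_integrable.1 (hαm.smul (r := 1) hwm)).congr
        (ae_of_all _ fun t => Complex.real_smul)
    rw [← integral_Ioc_eq_integral_Ioo, ← intervalIntegral.integral_of_le hax.le]
    simp only [Complex.real_smul]
    exact intervalIntegral.integral_eq_sub_of_hasDerivAt_of_tendsto hax
      (fun t ht => hasDerivAt_ofReal_rpow_sub_mul ht.1 (hderiv' t ht)) hint hF
      ((hasDerivAt_ofReal_rpow_sub_mul hax (hderiv x ⟨hax, le_rfl⟩)).continuousAt.tendsto.mono_left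
        nhdsWithin_le_nhds)
  have hw2 : ∫ t in Ioo a x, w t ^ 2 = (x - a) ^ (-2 * s) / (-2 * s) := by
    have hq : (-s - 1/2) * 2 + 1 = -2 * s := by ring
    rw [← hq, ← integral_Ioo_rpow_sub hax.le (by linarith)]
    refine setIntegral_congr_fun measurableSet_Ioo fun t ht => ?_
    rw [← Real.rpow_natCast, ← Real.rpow_mul (sub_pos.2 ht.1).le]
    norm_num
  rw [← hFTC, ← hw2]
  exact norm_integral_smul_le_of_memLp_two hwm hαm

theorem norm_div_sqrt_sub_mul_rpow_le (hs : s < 0) (hax : a < x)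
    (hderiv : ∀ t ∈ Ioc a x, HasDerivAt f (f' t) t)
    (hα : IntegrableOn (fun t => ‖f' t - (((s + 1/2) / (t - a) : ℝ) : ℂ) * f t‖ ^ 2) (Ioo a x))
    (hF : Tendsto (fun c => (((c - a) ^ (-s - 1/2 : ℝ) : ℝ) : ℂ) * f c) (𝓝[>] a) (𝓝 F)) :
    ‖f x / (((x - a) ^ ((1 : ℝ)/2) : ℝ) : ℂ) - F * (((x - a) ^ (s : ℝ) : ℝ) : ℂ)‖ ≤
      (-2 * s) ^ (-(1 : ℝ)/2) *
        (∫ t in Ioo a x, ‖f' t - (((s + 1/2) / (t - a) : ℝ) : ℂ) * f t‖ ^ 2) ^ ((1 : ℝ)/2) := by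
  have hxa : 0 < x - a := sub_pos.2 hax
  have hLHS : f x / (((x - a) ^ ((1 : ℝ)/2) : ℝ) : ℂ) - F * (((x - a) ^ (s : ℝ) : ℝ) : ℂ) =
      (((x - a) ^ (s : ℝ) : ℝ) : ℂ) * ((((x - a) ^ (-s - 1/2 : ℝ) : ℝ) : ℂ) * f x - F) := by
    have hpow : (x - a) ^ (s : ℝ) * (x - a) ^ (-s - 1/2 : ℝ) = ((x - a) ^ ((1 : ℝ)/2))⁻¹ := by
      rw [← Real.rpow_add hxa, ← Real.rpow_neg hxa.le]
      ring_nf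
    rw [div_eq_mul_inv, ← Complex.ofReal_inv, ← hpow]
    push_cast
    ring
  have hconst : (x - a) ^ (s : ℝ) * ((x - a) ^ (-2 * s) / (-2 * s)) ^ ((1 : ℝ)/2) =
      (-2 * s) ^ (-(1 : ℝ)/2) := by
    rw [Real.div_rpow (Real.rpow_nonneg hxa.le _) (by linarith), ← Real.rpow_mul hxa.le,
      mul_div_assoc', ← Real.rpow_add hxa, neg_div, Real.rpow_neg (by linarith)]
    ring_nf
    simp
  rw [hLHS, norm_mul, Complex.norm_real, Real.norm_of_nonneg (Real.rpow_nonneg hxa.le _),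
    ← hconst, mul_assoc]
  exact mul_le_mul_of_nonneg_left (norm_rpow_sub_mul_sub_le hs hax hderiv hα hF)
    (Real.rpow_nonneg hxa.le _)

end Estimate

theorem stmt7_general (a b s : ℝ) (hs : s ≤ -1)
    (f f' : ℝ → ℂ) (F : ℂ)
    (hderiv : ∀ x ∈ Ioo a b, HasDerivAt f (f' x) x)
    (hαL2 : IntegrableOn
      (fun x => ‖f' x - (((s + 1/2) / (x - a) : ℝ) : ℂ) * f x‖ ^ 2) (Ioo a b))
    (hF : Tendsto (fun c => (((c - a) ^ (-s - 1/2 : ℝ) : ℝ) : ℂ) * f c)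
      (nhdsWithin a (Ioi a)) (nhds F)) :
    ∀ x ∈ Ioo a b,
      ‖f x / (((x - a) ^ ((1 : ℝ)/2) : ℝ) : ℂ) - F * (((x - a) ^ (s : ℝ) : ℝ) : ℂ)‖ ≤
        (-2 * s) ^ ((1 : ℝ)/2) *
          (∫ t in Ioo a x,
            ‖f' t - (((s + 1/2) / (t - a) : ℝ) : ℂ) * f t‖ ^ 2) ^ ((1 : ℝ)/2) := by
  rintro x ⟨hax, hxb⟩
  have hsub : Ioc a x ⊆ Ioo a b := Ioc_subset_Ioo_right hxb
  refine (norm_div_sqrt_sub_mul_rpow_le (by linarith) hax (fun t ht => hderiv t (hsub ht))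
    (hαL2.mono_set (Ioo_subset_Ioo_right hxb.le)) hF).trans ?_
  refine mul_le_mul_of_nonneg_right ?_ (Real.rpow_nonneg (integral_nonneg fun _ => by positivity) _)
  exact Real.rpow_le_rpow_of_exponent_le (by linarith) (by norm_num)

/-- For `s_a ≤ -1` and `f` locally absolutely continuous with `α_{s_a} f ∈ L²`,
one has `|f(x)/(x-a)^{1/2} - F (x-a)^{s_a}| ≤ (-2s_a)^{1/2} ‖α_{s_a} f‖_{L²((a,x))}`
where `F = lim_{c→a⁺} (c-a)^{-s_a-1/2} f(c)`. -/
theorem stmt7 (a b s : ℝ) (hab : a < b) (hs : s ≤ -1)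
    (f f' : ℝ → ℂ) (F : ℂ)
    (hderiv : ∀ x ∈ Ioo a b, HasDerivAt f (f' x) x)
    (hαL2 : IntegrableOn
      (fun x => ‖f' x - (((s + 1/2) / (x - a) : ℝ) : ℂ) * f x‖ ^ 2) (Ioo a b))
    (hF : Tendsto (fun c => (((c - a) ^ (-s - 1/2 : ℝ) : ℝ) : ℂ) * f c)
      (nhdsWithin a (Ioi a)) (nhds F)) :
    ∀ x ∈ Ioo a b,
      ‖f x / (((x - a) ^ ((1 : ℝ)/2) : ℝ) : ℂ) - F * (((x - a) ^ (s : ℝ) : ℝ) : ℂ)‖ ≤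
        (-2 * s) ^ ((1 : ℝ)/2) *
          (∫ t in Ioo a x,
            ‖f' t - (((s + 1/2) / (t - a) : ℝ) : ℂ) * f t‖ ^ 2) ^ ((1 : ℝ)/2) :=
  stmt7_general a b s hs f f' F hderiv hαL2 hF
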